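/- An ω-regular language L ⊆ Σ^ω is not bounded if and only if there exist finite words x̂₀, x̂₁, x̂₂ ∈ Σ* and x₀, x₁, x₂ ∈ Σ⁺ such that x̂₀·x₀*·x̂₁·x₁^ω ⊆ L and x̂₀·x₀*·x̂₂·x₂^ω ∩ L = ∅. -/

import Mathlib

structure DetAuto (α : Type) where
  Q : Type
  [fin : Fintype Q]
  init : Q
  δ : Q → α → Q

attribute [instance] DetAuto.fin

/-- The run of a deterministic automaton on an infinite word. -/
def DetAuto.run {α : Type} (M : DetAuto α) (x : ℕ → α) : ℕ → M.Q
  | 0 => M.init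
  | n + 1 => M.δ (M.run x n) (x n)

/-- Parity acceptance: the maximal color occurring infinitely often in the run is odd. -/
def ParityAccept {α : Type} (M : DetAuto α) (c : M.Q → ℕ) (x : ℕ → α) : Prop :=
  ∃ m, Odd m ∧ (∃ᶠ n in Filter.atTop, c (M.run x n) = m) ∧
    ∀ m', (∃ᶠ n in Filter.atTop, c (M.run x n) = m') → m' ≤ m

/-- A language is ω-regular iff it is recognized by some deterministic parity automaton. -/
def OmegaRegular {α : Type} (L : Set (ℕ → α)) : Prop :=
  ∃ (M : DetAuto α) (c : M.Q → ℕ), ∀ x, x ∈ L ↔ ParityAccept M c x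

/-- `u` is a prefix of the infinite word `w`. -/
def HasPrefixWord {α : Type} (w : ℕ → α) (u : List α) : Prop :=
  ∀ i : Fin u.length, w i.1 = u.get i

/-- The ω-language `a·b*·c·d^ω`. -/
def LangStarOmega {α : Type} (a b c d : List α) : Set (ℕ → α) :=
  { w | ∃ n : ℕ, ∀ m, HasPrefixWord w
      (a ++ (List.replicate n b).flatten ++ c ++ (List.replicate m d).flatten) }

/-- `L` is bounded: every infinite word has a finite prefix all of whose infinite
extensions are in `L`, or none of whose infinite extensions are in `L`. -/
def BoundedLang {α : Type} (L : Set (ℕ → α)) : Prop :=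
  ∀ w : ℕ → α, ∃ n : ℕ,
    (∀ w' : ℕ → α, (∀ i < n, w' i = w i) → w' ∈ L) ∨
    (∀ w' : ℕ → α, (∀ i < n, w' i = w i) → w' ∉ L)

/-!
If `L` is not bounded, some word `w` has, for every `n`, extensions of `w[0,n)` both in and out
of `L`. By pigeonhole the run on `w` repeats a state at positions `a < a + p`, so `x₀ = w[a,a+p)`
can be pumped. An extension `x` of `w[0,a)` can be replaced by an ultimately periodic word
`x[0,i)·z^ω` with the same acceptance: close a lasso at a recurring state of maximal colour beyond
which no larger colour occurs. As `w[0,a)·x₀ᵏ` leads to the same state as `x[0,a)`, every word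
`w[0,a)·x₀ᵏ·x[a,i)·z^ω` is accepted iff `x` is; taking `x` once in and once outside `L` gives the
two families. Conversely, the two families show that no prefix of `x̂₀·x₀^ω` decides membership
in `L`.
-/

open Filter Stream'

theorem List.length_flatten_replicate {α : Type*} (k : ℕ) (l : List α) :
    (List.replicate k l).flatten.length = k * l.length := by
  simp only [List.length_flatten, List.map_replicate, List.sum_replicate, smul_eq_mul]

theorem List.foldl_flatten_replicate_of_foldl_eq {α β : Type*} {f : β → α → β} {l : List α}
    {b : β} (h : l.foldl f b = b) (k : ℕ) : (List.replicate k l).flatten.foldl f b = b := by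
  induction k with
  | zero => rfl
  | succ k ih => rw [List.replicate_succ, List.flatten_cons, List.foldl_append, h, ih]

theorem Filter.frequently_atTop_add_iff {p : ℕ → Prop} (a : ℕ) :
    (∃ᶠ t in atTop, p (a + t)) ↔ ∃ᶠ n in atTop, p n := by
  have h := frequently_map (f := atTop) (m := (· + a)) (P := p)
  rw [map_add_atTop_eq_nat] at h
  simpa only [add_comm] using h.symm

theorem Filter.eventually_frequently_eq {ι β : Type*} [Finite β] (l : Filter ι) (r : ι → β) :
    ∀ᶠ n in l, ∃ᶠ k in l, r k = r n := by
  have : ∀ b, ∀ᶠ n in l, (∃ᶠ k in l, r k = b) ∨ r n ≠ b := fun b => by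
    by_cases hb : ∃ᶠ k in l, r k = b
    · exact Eventually.of_forall fun _ => Or.inl hb
    · exact (not_frequently.mp hb).mono fun _ => Or.inr
  exact (eventually_all.mpr this).mono fun n hn => (hn (r n)).resolve_right (not_not.mpr rfl)

theorem Filter.exists_frequently_eq_and_eventually_le {ι β γ : Type*} [Finite β] [LinearOrder γ]
    (l : Filter ι) [l.NeBot] (r : ι → β) (f : β → γ) :
    ∃ b, (∃ᶠ n in l, r n = b) ∧ ∀ᶠ n in l, f (r n) ≤ f b := by
  classical
  have := Fintype.ofFinite β
  set S := Finset.univ.filter fun b => ∃ᶠ n in l, r n = b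
  obtain ⟨n, hn⟩ := (l.eventually_frequently_eq r).exists
  obtain ⟨b, hbS, hmax⟩ := S.exists_max_image f ⟨r n, by simpa [S] using hn⟩
  refine ⟨b, by simpa [S] using hbS, (l.eventually_frequently_eq r).mono fun k hk => ?_⟩
  exact hmax _ (by simpa [S] using hk)

namespace Stream'

variable {α : Type*}

theorem cycle_eq_flatten_replicate_append (l : List α) (h : l ≠ []) (k : ℕ) :
    cycle l h = (List.replicate k l).flatten ++ₛ cycle l h := by
  induction k with
  | zero => simp
  | succ k ih => rw [List.replicate_succ, List.flatten_cons, append_append_stream, ← ih, ← cycle_eq]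

theorem take_length_append_stream (l : List α) (s : Stream' α) : (l ++ₛ s).take l.length = l := by
  rw [take_append_of_le_length _ _ _ le_rfl, List.take_length]

theorem drop_take_append_stream (x s : Stream' α) (n : ℕ) : (x.take n ++ₛ s).drop n = s := by
  simpa only [Stream'.length_take] using drop_append_stream (x.take n) s

theorem take_eq_take_of_forall_lt {x y : Stream' α} {n : ℕ} (h : ∀ i < n, x i = y i) :
    x.take n = y.take n :=
  List.ext_getElem (by simp [Stream'.length_take]) fun i hx _ => by
    simp only [take_get]
    exact h i (by simpa [Stream'.length_take] using hx)

end Stream'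

theorem hasPrefixWord_append_stream {α : Type} (u : List α) (s : Stream' α) :
    HasPrefixWord (u ++ₛ s) u := fun i => get_append_left i.1 u s i.2

theorem mem_langStarOmega_iff {α : Type} {a b c d : List α} (hd : d ≠ []) {w : Stream' α} :
    w ∈ LangStarOmega a b c d ↔
      ∃ n, w = (a ++ (List.replicate n b).flatten ++ c) ++ₛ cycle d hd := by
  constructor
  · rintro ⟨n, hw⟩
    refine ⟨n, Stream'.ext fun i => ?_⟩
    have hi : i < (a ++ (List.replicate n b).flatten ++ c ++
        (List.replicate (i + 1) d).flatten).length := by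
      have := List.length_pos_iff.mpr hd
      simp only [List.length_append, List.length_flatten_replicate]
      nlinarith
    rw [cycle_eq_flatten_replicate_append d hd (i + 1), ← append_append_stream,
      get_append_left i _ _ hi]
    exact hw (i + 1) ⟨i, hi⟩
  · rintro ⟨n, rfl⟩
    refine ⟨n, fun m => ?_⟩
    rw [cycle_eq_flatten_replicate_append d hd m, ← append_append_stream]
    exact hasPrefixWord_append_stream _ _

namespace DetAuto

variable {α : Type} (M : DetAuto α)

theorem run_eq_foldl_take (x : Stream' α) (n : ℕ) : M.run x n = (x.take n).foldl M.δ M.init := by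
  induction n with
  | zero => rfl
  | succ n ih => rw [take_succ', List.foldl_append, ← ih]; rfl

theorem run_congr {x y : Stream' α} {n : ℕ} (h : ∀ k < n, x k = y k) : M.run x n = M.run y n := by
  rw [run_eq_foldl_take, run_eq_foldl_take, take_eq_take_of_forall_lt h]

theorem run_add (x : Stream' α) (n k : ℕ) :
    M.run x (n + k) = ((x.drop n).take k).foldl M.δ (M.run x n) := by
  rw [run_eq_foldl_take, run_eq_foldl_take, Stream'.take_add, List.foldl_append]

theorem run_append_stream_length (l : List α) (s : Stream' α) :
    M.run (l ++ₛ s) l.length = l.foldl M.δ M.init := by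
  rw [run_eq_foldl_take, take_length_append_stream]

theorem run_take_append_stream (x s : Stream' α) (n : ℕ) : M.run (x.take n ++ₛ s) n = M.run x n :=
  M.run_congr fun k hk => (get_append_left k _ _ (by simpa [Stream'.length_take])).trans
    (take_get k _ _ _)

theorem run_add_eq_of_run_eq {x y : Stream' α} {a b : ℕ} (hrun : M.run x a = M.run y b)
    (hdrop : x.drop a = y.drop b) (t : ℕ) : M.run x (a + t) = M.run y (b + t) := by
  rw [run_add, run_add, hrun, hdrop]

theorem foldl_pumped_eq_run {x : Stream' α} {a p : ℕ} (hloop : M.run x (a + p) = M.run x a)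
    (k : ℕ) : (x.take a ++ (List.replicate k ((x.drop a).take p)).flatten).foldl M.δ M.init =
      M.run x a := by
  rw [List.foldl_append, ← run_eq_foldl_take]
  exact List.foldl_flatten_replicate_of_foldl_eq (by rw [← run_add, hloop]) k

variable (c : M.Q → ℕ)

theorem parityAccept_iff_of_run_add_eq {x y : Stream' α} {a b : ℕ}
    (h : ∀ t, M.run x (a + t) = M.run y (b + t)) : ParityAccept M c x ↔ ParityAccept M c y := by
  have hfreq (m : ℕ) : (∃ᶠ n in atTop, c (M.run x n) = m) ↔ ∃ᶠ n in atTop, c (M.run y n) = m := by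
    rw [← frequently_atTop_add_iff a,
      ← frequently_atTop_add_iff (p := fun n => c (M.run y n) = m) b]
    simp only [h]
  simp only [ParityAccept, hfreq]

theorem parityAccept_iff_odd {x : Stream' α} {m : ℕ} (hfreq : ∃ᶠ n in atTop, c (M.run x n) = m)
    (hle : ∀ᶠ n in atTop, c (M.run x n) ≤ m) : ParityAccept M c x ↔ Odd m := by
  constructor
  · rintro ⟨m', hodd, hfreq', hmax⟩
    obtain ⟨n, hn, hn'⟩ := (hfreq'.and_eventually hle).exists
    rwa [le_antisymm (hmax m hfreq) (hn ▸ hn')]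
  · refine fun hodd => ⟨m, hodd, hfreq, fun m' hm' => ?_⟩
    obtain ⟨n, hn, hn'⟩ := (hm'.and_eventually hle).exists
    exact hn ▸ hn'

theorem run_take_append_cycle {x : Stream' α} {i p : ℕ} (hloop : M.run x (i + p) = M.run x i)
    (hz : (x.drop i).take p ≠ []) (t : ℕ) :
    M.run (x.take i ++ₛ cycle ((x.drop i).take p) hz) (i + t) = M.run x (i + t % p) := by
  set y := x.take i ++ₛ cycle ((x.drop i).take p) hz
  have hp : 0 < p := by simpa [Stream'.length_take] using List.length_pos_iff.mpr hz
  have hy : y = x.take (i + p) ++ₛ cycle ((x.drop i).take p) hz := by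
    rw [Stream'.take_add, append_append_stream, ← cycle_eq]
  have hrun : ∀ t ≤ p, M.run y (i + t) = M.run x (i + t) := fun t ht =>
    M.run_congr fun k hk => by
      rw [hy]
      exact (get_append_left k _ _ (by simp [Stream'.length_take]; omega)).trans (take_get k _ _ _)
  have hper : Function.Periodic (fun t => M.run y (i + t)) p := fun t => by
    have hloop' : M.run y (i + p) = M.run y i := by
      simpa only [add_zero, hloop, hrun p le_rfl] using (hrun 0 (Nat.zero_le _)).symm
    have hdrop : y.drop (i + p) = y.drop i := by
      rw [drop_take_append_stream]
      conv_lhs => rw [hy]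
      rw [drop_take_append_stream]
    simpa only [add_assoc, add_comm t] using M.run_add_eq_of_run_eq hloop' hdrop t
  rw [← hper.map_mod_nat t]
  exact hrun _ (Nat.mod_lt _ hp).le

theorem exists_lasso_parityAccept_iff (x : Stream' α) (N : ℕ) :
    ∃ i ≥ N, ∃ (z : List α) (hz : z ≠ []),
      (ParityAccept M c (x.take i ++ₛ cycle z hz) ↔ ParityAccept M c x) := by
  obtain ⟨q, hq, hle⟩ := exists_frequently_eq_and_eventually_le atTop (M.run x) c
  obtain ⟨N', hN'⟩ := eventually_atTop.mp hle
  obtain ⟨i, hi, hqi⟩ := frequently_atTop.mp hq (max N N')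
  obtain ⟨j, hj, hqj⟩ := frequently_atTop.mp hq (i + 1)
  obtain ⟨p, rfl⟩ := Nat.exists_eq_add_of_lt hj
  have hz : (x.drop i).take (p + 1) ≠ [] :=
    List.ne_nil_of_length_pos (by simp [Stream'.length_take])
  have hlasso := M.run_take_append_cycle (by rw [← add_assoc, hqj, hqi]) hz
  refine ⟨i, le_of_max_le_left hi, _, hz, ?_⟩
  rw [M.parityAccept_iff_odd c (hq.mono fun n hn => hn ▸ rfl) hle]
  refine M.parityAccept_iff_odd c (frequently_atTop.mpr fun a => ⟨i + a * (p + 1), ?_, ?_⟩) ?_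
  · nlinarith
  · rw [hlasso, Nat.mul_mod_left, add_zero, hqi]
  · refine eventually_atTop.mpr ⟨i, fun n hn => ?_⟩
    obtain ⟨t, rfl⟩ := Nat.exists_eq_add_of_le hn
    rw [hlasso]
    exact hN' _ (by omega)

theorem exists_pumped_parityAccept_iff {w x : Stream' α} {a p : ℕ}
    (hloop : M.run w (a + p) = M.run w a) (hxw : x.take a = w.take a) :
    ∃ (y z : List α) (hz : z ≠ []), ∀ k,
      (ParityAccept M c
        ((w.take a ++ (List.replicate k ((w.drop a).take p)).flatten ++ y) ++ₛ cycle z hz) ↔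
        ParityAccept M c x) := by
  obtain ⟨i, hi, z, hz, hacc⟩ := M.exists_lasso_parityAccept_iff c x a
  obtain ⟨r, rfl⟩ := Nat.exists_eq_add_of_le hi
  refine ⟨(x.drop a).take r, z, hz, fun k => .trans ?_ hacc⟩
  set P := w.take a ++ (List.replicate k ((w.drop a).take p)).flatten ++ (x.drop a).take r
  refine M.parityAccept_iff_of_run_add_eq c
    (M.run_add_eq_of_run_eq (a := P.length) (b := a + r) ?_ ?_)
  · rw [run_append_stream_length, List.foldl_append, foldl_pumped_eq_run M hloop,
      run_eq_foldl_take, ← hxw, ← run_eq_foldl_take, ← run_add, run_take_append_stream]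
  · rw [drop_append_stream, drop_take_append_stream]

end DetAuto

theorem not_boundedLang_of_langStarOmega {α : Type} {L : Set (ℕ → α)}
    {xh₀ xh₁ xh₂ x₀ x₁ x₂ : List α}
    (h₀ : x₀ ≠ []) (h₁ : x₁ ≠ []) (h₂ : x₂ ≠ []) (hsub : LangStarOmega xh₀ x₀ xh₁ x₁ ⊆ L)
    (hdisj : LangStarOmega xh₀ x₀ xh₂ x₂ ∩ L = ∅) : ¬ BoundedLang L := by
  intro hB
  obtain ⟨n, hn⟩ := hB (xh₀ ++ₛ cycle x₀ h₀)
  set P := xh₀ ++ (List.replicate n x₀).flatten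
  have hP : n ≤ P.length := by
    have := List.length_pos_iff.mpr h₀
    simp only [P, List.length_append, List.length_flatten_replicate]
    nlinarith
  have hagree (s : Stream' α) : ∀ i < n, (P ++ₛ s) i = (xh₀ ++ₛ cycle x₀ h₀) i := fun i hi => by
    rw [cycle_eq_flatten_replicate_append x₀ h₀ n, ← append_append_stream]
    exact (get_append_left i P s (by omega)).trans (get_append_left i P _ (by omega)).symm
  have hmem (xh x : List α) (hx : x ≠ []) :
      P ++ₛ (xh ++ₛ cycle x hx) ∈ LangStarOmega xh₀ x₀ xh x :=
    (mem_langStarOmega_iff hx).mpr ⟨n, (append_append_stream _ _ _).symm⟩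
  rcases hn with hL | hL
  · exact Set.eq_empty_iff_forall_notMem.mp hdisj _ ⟨hmem xh₂ x₂ h₂, hL _ (hagree _)⟩
  · exact hL _ (hagree _) (hsub (hmem xh₁ x₁ h₁))

theorem stmt_18_general {Sig : Type} (L : Set (ℕ → Sig)) (hL : OmegaRegular L) :
    ¬ BoundedLang L ↔
      ∃ xh₀ xh₁ xh₂ x₀ x₁ x₂ : List Sig, x₀ ≠ [] ∧ x₁ ≠ [] ∧ x₂ ≠ [] ∧
        LangStarOmega xh₀ x₀ xh₁ x₁ ⊆ L ∧
        LangStarOmega xh₀ x₀ xh₂ x₂ ∩ L = ∅ := by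
  refine ⟨fun hnb => ?_, fun ⟨_, _, _, _, _, _, h₀, h₁, h₂, hsub, hdisj⟩ =>
    not_boundedLang_of_langStarOmega h₀ h₁ h₂ hsub hdisj⟩
  obtain ⟨M, c, hMc⟩ := hL
  obtain ⟨w, hw⟩ : ∃ w : ℕ → Sig, ∀ n,
      (∃ w' : ℕ → Sig, (∀ i < n, w' i = w i) ∧ w' ∉ L) ∧
        ∃ w' : ℕ → Sig, (∀ i < n, w' i = w i) ∧ w' ∈ L := by
    simpa [BoundedLang, not_or] using hnb
  obtain ⟨a, b, hab, hloop⟩ :=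
    Set.finite_univ.exists_lt_map_eq_of_forall_mem (f := M.run w) fun _ => Set.mem_univ _
  obtain ⟨p, rfl⟩ := Nat.exists_eq_add_of_lt hab
  obtain ⟨⟨w₂, hw₂, hw₂L⟩, w₁, hw₁, hw₁L⟩ := hw a
  obtain ⟨y₁, z₁, hz₁, hacc₁⟩ :=
    M.exists_pumped_parityAccept_iff c (p := p + 1) hloop.symm (take_eq_take_of_forall_lt hw₁)
  obtain ⟨y₂, z₂, hz₂, hacc₂⟩ :=
    M.exists_pumped_parityAccept_iff c (p := p + 1) hloop.symm (take_eq_take_of_forall_lt hw₂)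
  refine ⟨take a w, y₁, y₂, take (p + 1) (drop a w), z₁, z₂,
    List.ne_nil_of_length_pos (by simp [Stream'.length_take]), hz₁, hz₂, fun v hv => ?_,
    Set.eq_empty_iff_forall_notMem.mpr fun v ⟨hv, hvL⟩ => ?_⟩
  · obtain ⟨k, rfl⟩ := (mem_langStarOmega_iff hz₁).mp hv
    exact (hMc _).mpr ((hacc₁ k).mpr ((hMc _).mp hw₁L))
  · obtain ⟨k, rfl⟩ := (mem_langStarOmega_iff hz₂).mp hv
    exact hw₂L ((hMc _).mpr ((hacc₂ k).mp ((hMc _).mp hvL)))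

/-- An ω-regular `L` is not bounded iff there are `x̂₀, x̂₁, x̂₂ ∈ Σ*` and
`x₀, x₁, x₂ ∈ Σ⁺` with `x̂₀·x₀*·x̂₁·x₁^ω ⊆ L` and `x̂₀·x₀*·x̂₂·x₂^ω ∩ L = ∅`. -/
theorem stmt_18 {Sig : Type} [Fintype Sig] (L : Set (ℕ → Sig)) (hL : OmegaRegular L) :
    ¬ BoundedLang L ↔
      ∃ xh₀ xh₁ xh₂ x₀ x₁ x₂ : List Sig, x₀ ≠ [] ∧ x₁ ≠ [] ∧ x₂ ≠ [] ∧
        LangStarOmega xh₀ x₀ xh₁ x₁ ⊆ L ∧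
        LangStarOmega xh₀ x₀ xh₂ x₂ ∩ L = ∅ :=
  stmt_18_general L hL
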